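/- Let i ∈ {1,…,N} and assume n_i > 0, O_i ≠ 0, D_i = O_i + w_i ≠ 0, and ⟨V⟩_α ≠ 0. Then the vector ζ_i = φ(D_i) − (⟨V⟩_α + w_i/n_i − (⟨w_i, ⟨V⟩_α⟩/(n_i ‖⟨V⟩_α‖²))·⟨V⟩_α) satisfies ‖ζ_i‖ ≤ 2 π̃_α ρ_i + 2 ρ_i² + π̃_i (1 + 4ρ_i) + (1 + 2ρ_i) √(Q_{i,n_iα}). -/

import Mathlib

open Finset
open scoped BigOperators RealInnerProductSpace

/-- Normalization operator `φ(x) = x / ‖x‖` on `ℝ³`. -/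
noncomputable def phi (x : EuclideanSpace ℝ (Fin 3)) : EuclideanSpace ℝ (Fin 3) := ‖x‖⁻¹ • x

/-!
With `e = φ(O_i)`, `v = φ(⟨V⟩_α)`, `m = ‖O_i‖` and `ν = n_i`, the error splits as
`ζ_i = A + (e - ⟨V⟩_α) + (m⁻¹ - ν⁻¹)(w_i - ⟨w_i,e⟩e) + ν⁻¹(⟨w_i,v⟩v - ⟨w_i,e⟩e)`,
where `A = φ(O_i + w_i) - e - m⁻¹(w_i - ⟨w_i,e⟩e)` is the second-order remainder of `φ` at `O_i`,
of size at most `2ρ_i²`. The other pieces are controlled by `‖e - O_i/ν‖ = π̃_i`,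
`‖v - ⟨V⟩_α‖ = π̃_α` and `‖O_i/ν - ⟨V⟩_α‖ ≤ √Q_{i,n_iα}`. The last bound holds because
`O_i - ν⟨V⟩_α = Σ_j c_j V_j` with `Σ_j c_j = 0`, so that
`‖Σ_j c_j V_j‖² = Σ_{j,j'} c_j c_j' (⟨V_j,V_j'⟩ - 1)`, and `1 - cos θ ≤ θ²/2`.
-/

open NormedSpace InnerProductGeometry

section InnerProductSpace

variable {E : Type*} [NormedAddCommGroup E] [InnerProductSpace ℝ E]

lemma norm_sum_smul_le_sum_of_nonneg {ι : Type*} (s : Finset ι) {V : ι → E}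
    (hV : ∀ j, ‖V j‖ = 1) {c : ι → ℝ} (hc : ∀ j, 0 ≤ c j) :
    ‖∑ j ∈ s, c j • V j‖ ≤ ∑ j ∈ s, c j :=
  (norm_sum_le _ _).trans_eq <| sum_congr rfl fun j _ => by
    rw [norm_smul, hV j, mul_one, Real.norm_of_nonneg (hc j)]

lemma norm_normalize_sub_inv_smul {x : E} (hx : x ≠ 0) {ν : ℝ} (hν : ‖x‖ ≤ ν) :
    ‖normalize x - ν⁻¹ • x‖ = 1 - ‖x‖ / ν := by
  have hx' : 0 < ‖x‖ := norm_pos_iff.2 hx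
  rw [NormedSpace.normalize, ← sub_smul, norm_smul, Real.norm_of_nonneg
    (sub_nonneg.2 (inv_anti₀ hx' hν)), sub_mul, inv_mul_cancel₀ hx'.ne', inv_mul_eq_div]

lemma norm_sub_inner_smul_le {e : E} (he : ‖e‖ = 1) (w : E) : ‖w - ⟪w, e⟫ • e‖ ≤ 2 * ‖w‖ := by
  have h := abs_real_inner_le_norm w e
  rw [he, mul_one] at h
  calc ‖w - ⟪w, e⟫ • e‖ ≤ ‖w‖ + |⟪w, e⟫| := by
        simpa [norm_smul, he] using norm_sub_le w (⟪w, e⟫ • e)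
    _ ≤ 2 * ‖w‖ := by linarith

lemma norm_inner_smul_sub_inner_smul_le {a b : E} (ha : ‖a‖ = 1) (hb : ‖b‖ = 1) (w : E) :
    ‖⟪w, a⟫ • a - ⟪w, b⟫ • b‖ ≤ 2 * ‖w‖ * ‖a - b‖ := by
  have hsplit : ⟪w, a⟫ • a - ⟪w, b⟫ • b = ⟪w, a - b⟫ • a + ⟪w, b⟫ • (a - b) := by
    rw [inner_sub_right, sub_smul, smul_sub]; abel
  have h1 : |⟪w, a - b⟫| ≤ ‖w‖ * ‖a - b‖ := abs_real_inner_le_norm w (a - b)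
  have h2 : |⟪w, b⟫| ≤ ‖w‖ := by simpa [hb] using abs_real_inner_le_norm w b
  calc ‖⟪w, a⟫ • a - ⟪w, b⟫ • b‖ ≤ |⟪w, a - b⟫| + |⟪w, b⟫| * ‖a - b‖ := by
        simpa [hsplit, norm_smul, ha] using norm_add_le (⟪w, a - b⟫ • a) (⟪w, b⟫ • (a - b))
    _ ≤ 2 * ‖w‖ * ‖a - b‖ := by nlinarith [norm_nonneg (a - b)]

-- With `s = ‖e + w‖`, `r = ‖w‖` and `2⟪w, e⟫ = s² - 1 - r²`, this is `4s` times the bound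
-- `‖(s⁻¹ - 1) • (e + w) + ⟪w, e⟫ • e‖² ≤ 4r⁴` needed below.
lemma normalize_remainder_poly_le {s r : ℝ} (hr : r ≤ 1) (h1 : 1 - r ≤ s) (h2 : s ≤ 1 + r) :
    4 * s * (1 - s) ^ 2 + s * (s ^ 2 - 1 - r ^ 2) ^ 2
      + 2 * (s ^ 2 - 1 - r ^ 2) * (s ^ 2 + 1 - r ^ 2) * (1 - s) ≤ 16 * s * r ^ 4 := by
  have hp : 0 ≤ s - 1 + r := by linarith
  have hq : 0 ≤ 1 + r - s := by linarith
  have hc : 0 ≤ 2 - 2 * r := by linarith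
  nlinarith [mul_nonneg (pow_nonneg hq 4) hc,
    mul_nonneg (mul_nonneg hp (pow_nonneg hq 3)) hc,
    mul_nonneg (mul_nonneg (pow_nonneg hp 2) (pow_nonneg hq 2)) hc,
    mul_nonneg hp (pow_nonneg hq 3),
    mul_nonneg (pow_nonneg hp 2) (pow_nonneg hq 2),
    mul_nonneg (pow_nonneg hp 3) hq,
    pow_nonneg hp 4,
    mul_nonneg (pow_nonneg hp 3) (pow_nonneg hq 2),
    mul_nonneg (pow_nonneg hp 4) hq,
    pow_nonneg hp 5]

lemma norm_normalize_add_sub_le_of_norm_eq_one {e w : E} (he : ‖e‖ = 1) (hew : e + w ≠ 0) :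
    ‖normalize (e + w) - e - (w - ⟪w, e⟫ • e)‖ ≤ 2 * ‖w‖ ^ 2 := by
  set s := ‖e + w‖
  set r := ‖w‖
  set a := ⟪w, e⟫
  have hs : 0 < s := norm_pos_iff.2 hew
  have ha : |a| ≤ r := by simpa [he] using abs_real_inner_le_norm w e
  have hs2 : s ^ 2 = 1 + 2 * a + r ^ 2 := by
    rw [norm_add_sq_real, he, real_inner_comm]; ring
  have hs_le : s ≤ 1 + r := by simpa [he] using norm_add_le e w
  have hs_ge : 1 - r ≤ s := by
    have h := norm_sub_norm_le e (-w)
    rw [sub_neg_eq_add, norm_neg, he] at h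
    linarith
  have hinv : (s⁻¹ - 1) * s = 1 - s := by field_simp
  have hrepr : normalize (e + w) - e - (w - a • e) = (s⁻¹ - 1) • (e + w) + a • e := by
    rw [NormedSpace.normalize, sub_smul, one_smul]; abel
  rw [hrepr]
  rcases le_or_gt 1 r with hr1 | hr1
  · calc ‖(s⁻¹ - 1) • (e + w) + a • e‖ ≤ ‖(s⁻¹ - 1) • (e + w)‖ + ‖a • e‖ := norm_add_le _ _
      _ = |1 - s| + |a| := by
          rw [norm_smul, norm_smul, he, mul_one, Real.norm_eq_abs, Real.norm_eq_abs, ← hinv,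
            abs_mul, abs_of_pos hs]
      _ ≤ 2 * r ^ 2 := by nlinarith [(abs_sub_le_iff.2 ⟨by linarith, by linarith⟩ : |1 - s| ≤ r)]
  · have hu : ⟪e + w, e⟫ = 1 + a := by
      rw [inner_add_left, real_inner_self_eq_norm_sq, he]; ring
    have hsq : ‖(s⁻¹ - 1) • (e + w) + a • e‖ ^ 2
        = (1 - s) ^ 2 + 2 * ((s⁻¹ - 1) * a * (1 + a)) + a ^ 2 := by
      rw [norm_add_sq_real, norm_smul, norm_smul, real_inner_smul_left, real_inner_smul_right, hu,
        he, Real.norm_eq_abs, Real.norm_eq_abs, mul_pow, mul_one, sq_abs, sq_abs, ← hinv]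
      ring
    have hpoly := normalize_remainder_poly_le hr1.le hs_ge hs_le
    rw [show s ^ 2 - 1 - r ^ 2 = 2 * a by linarith,
      show s ^ 2 + 1 - r ^ 2 = 2 + 2 * a by linarith] at hpoly
    have hmul : s * ((s⁻¹ - 1) * a * (1 + a)) = (1 - s) * a * (1 + a) := by
      rw [← hinv]; ring
    have hbound : (1 - s) ^ 2 + 2 * ((s⁻¹ - 1) * a * (1 + a)) + a ^ 2 ≤ (2 * r ^ 2) ^ 2 := by
      rw [← mul_le_mul_iff_of_pos_left hs]
      nlinarith
    exact pow_le_pow_iff_left₀ (norm_nonneg _) (by positivity) two_ne_zero |>.1 (hsq ▸ hbound)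

lemma norm_normalize_add_sub_le {O w : E} (hO : O ≠ 0) (hOw : O + w ≠ 0) :
    ‖normalize (O + w) - normalize O - ‖O‖⁻¹ • (w - ⟪w, normalize O⟫ • normalize O)‖
      ≤ 2 * (‖w‖ / ‖O‖) ^ 2 := by
  have hm : 0 < ‖O‖⁻¹ := inv_pos.2 (norm_pos_iff.2 hO)
  have hscale : normalize O + ‖O‖⁻¹ • w = ‖O‖⁻¹ • (O + w) := by
    rw [smul_add, NormedSpace.normalize]
  have key := norm_normalize_add_sub_le_of_norm_eq_one (norm_normalize hO)
    (w := ‖O‖⁻¹ • w) (hscale ▸ smul_ne_zero hm.ne' hOw)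
  rw [hscale, normalize_smul_of_pos hm, real_inner_smul_left, mul_smul, ← smul_sub, norm_smul,
    Real.norm_of_nonneg hm.le] at key
  rwa [div_eq_inv_mul]

lemma one_sub_inner_le_angle_sq_div_two {x y : E} (hx : ‖x‖ = 1) (hy : ‖y‖ = 1) :
    1 - ⟪x, y⟫ ≤ angle x y ^ 2 / 2 := by
  have h := cos_angle_mul_norm_mul_norm x y
  rw [hx, hy, mul_one, mul_one] at h
  linarith [Real.one_sub_sq_div_two_le_cos (x := angle x y)]

lemma norm_sum_smul_sq_le_of_sum_eq_zero {ι : Type*} [Fintype ι] {V : ι → E}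
    (hV : ∀ j, ‖V j‖ = 1) {c : ι → ℝ} (hc : ∑ j, c j = 0) :
    ‖∑ j, c j • V j‖ ^ 2 ≤ ∑ j, ∑ j', |c j| * |c j'| * angle (V j) (V j') ^ 2 / 2 := by
  have hexpand : ‖∑ j, c j • V j‖ ^ 2 = ∑ j, ∑ j', c j * c j' * ⟪V j, V j'⟫ := by
    simp only [← real_inner_self_eq_norm_sq, sum_inner, inner_sum, real_inner_smul_left,
      real_inner_smul_right, mul_assoc]
    exact sum_congr rfl fun j _ => sum_congr rfl fun j' _ => by rw [real_inner_comm]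
  have hzero : ∑ j, ∑ j', c j * c j' = 0 := by rw [← sum_mul_sum, hc, zero_mul]
  calc ‖∑ j, c j • V j‖ ^ 2 = ∑ j, ∑ j', c j * c j' * (⟪V j, V j'⟫ - 1) := by
        simp only [mul_sub, mul_one, sum_sub_distrib, hzero, sub_zero, hexpand]
    _ ≤ ∑ j, ∑ j', |c j| * |c j'| * angle (V j) (V j') ^ 2 / 2 := by
        gcongr with j _ j' _
        have hcos := one_sub_inner_le_angle_sq_div_two (hV j) (hV j')
        have hinner : 0 ≤ 1 - ⟪V j, V j'⟫ := by
          linarith [(real_inner_le_norm (V j) (V j')).trans_eq (by rw [hV j, hV j', one_mul])]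
        calc c j * c j' * (⟪V j, V j'⟫ - 1) = -(c j * c j') * (1 - ⟪V j, V j'⟫) := by ring
          _ ≤ |c j| * |c j'| * (1 - ⟪V j, V j'⟫) := by
              rw [← abs_mul]; exact mul_le_mul_of_nonneg_right (neg_le_abs _) hinner
          _ ≤ |c j| * |c j'| * angle (V j) (V j') ^ 2 / 2 := by
              rw [mul_div_assoc]; gcongr

lemma norm_inv_smul_sum_sub_sum_le_sqrt {ι : Type*} [Fintype ι] {V : ι → E}
    (hV : ∀ j, ‖V j‖ = 1) {ω α : ι → ℝ} {ν : ℝ} (hν : ∑ j, ω j = ν) (hν0 : ν ≠ 0)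
    (hα : ∑ j, α j = 1) :
    ‖ν⁻¹ • ∑ j, ω j • V j - ∑ j, α j • V j‖ ≤ √(1 / ν ^ 2 *
      ∑ j, ∑ j', |ω j - ν * α j| * |ω j' - ν * α j'| * angle (V j) (V j') ^ 2 / 2) := by
  set c : ι → ℝ := fun j => ω j - ν * α j
  have hc : ∑ j, c j = 0 := by simp only [c, sum_sub_distrib, ← mul_sum, hα, hν, mul_one, sub_self]
  have hvec : ν⁻¹ • ∑ j, ω j • V j - ∑ j, α j • V j = ν⁻¹ • ∑ j, c j • V j := by
    simp only [c, sub_smul, sum_sub_distrib, mul_smul, ← smul_sum, smul_sub, inv_smul_smul₀ hν0]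
  refine Real.le_sqrt_of_sq_le ?_
  rw [hvec, norm_smul, mul_pow, Real.norm_eq_abs, sq_abs, one_div, inv_pow]
  exact mul_le_mul_of_nonneg_left (norm_sum_smul_sq_le_of_sum_eq_zero hV hc) (by positivity)

lemma inner_div_smul_eq_inv_smul_inner_normalize_smul {x : E} (hx : x ≠ 0) (w : E) (ν : ℝ) :
    (⟪w, x⟫ / (ν * ‖x‖ ^ 2)) • x = ν⁻¹ • (⟪w, normalize x⟫ • normalize x) := by
  have hx' : ‖x‖ ≠ 0 := norm_ne_zero_iff.2 hx
  simp only [NormedSpace.normalize, real_inner_smul_right, smul_smul]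
  congr 1
  field_simp

theorem norm_normalize_add_sub_linearization_le {O w Vα : E} {ν q : ℝ} (hO : O ≠ 0)
    (hOw : O + w ≠ 0) (hVα : Vα ≠ 0) (hOν : ‖O‖ ≤ ν) (hVα1 : ‖Vα‖ ≤ 1)
    (hq : ‖ν⁻¹ • O - Vα‖ ≤ q) :
    ‖normalize (O + w) - (Vα + ν⁻¹ • w - (⟪w, Vα⟫ / (ν * ‖Vα‖ ^ 2)) • Vα)‖ ≤
      2 * (1 - ‖Vα‖) * (‖w‖ / ‖O‖) + 2 * (‖w‖ / ‖O‖) ^ 2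
      + (1 - ‖O‖ / ν) * (1 + 4 * (‖w‖ / ‖O‖)) + (1 + 2 * (‖w‖ / ‖O‖)) * q := by
  set e := normalize O
  set v := normalize Vα
  have hm : 0 < ‖O‖ := norm_pos_iff.2 hO
  have hν : 0 < ν := hm.trans_le hOν
  have he : ‖e‖ = 1 := norm_normalize hO
  have hv : ‖v‖ = 1 := norm_normalize hVα
  have heO : ‖e - ν⁻¹ • O‖ = 1 - ‖O‖ / ν := norm_normalize_sub_inv_smul hO hOν
  have hvV : ‖v - Vα‖ = 1 - ‖Vα‖ := by simpa using norm_normalize_sub_inv_smul hVα hVα1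
  have hsplit : normalize (O + w) - (Vα + ν⁻¹ • w - (⟪w, Vα⟫ / (ν * ‖Vα‖ ^ 2)) • Vα)
      = (normalize (O + w) - e - ‖O‖⁻¹ • (w - ⟪w, e⟫ • e)) + (e - Vα)
        + (‖O‖⁻¹ - ν⁻¹) • (w - ⟪w, e⟫ • e) + ν⁻¹ • (⟪w, v⟫ • v - ⟪w, e⟫ • e) := by
    rw [inner_div_smul_eq_inv_smul_inner_normalize_smul hVα, sub_smul, smul_sub, smul_sub,
      smul_sub]
    abel
  have hA := norm_normalize_add_sub_le hO hOw
  have hB : ‖e - Vα‖ ≤ (1 - ‖O‖ / ν) + q := by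
    rw [← sub_add_sub_cancel e (ν⁻¹ • O) Vα, ← heO]
    exact norm_add_le_of_le le_rfl hq
  have hC : ‖(‖O‖⁻¹ - ν⁻¹) • (w - ⟪w, e⟫ • e)‖ ≤ 2 * (‖w‖ / ‖O‖) * (1 - ‖O‖ / ν) := by
    have hcoef : 0 ≤ ‖O‖⁻¹ - ν⁻¹ := sub_nonneg.2 (inv_anti₀ hm hOν)
    calc ‖(‖O‖⁻¹ - ν⁻¹) • (w - ⟪w, e⟫ • e)‖ ≤ (‖O‖⁻¹ - ν⁻¹) * (2 * ‖w‖) := by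
          rw [norm_smul, Real.norm_of_nonneg hcoef]
          exact mul_le_mul_of_nonneg_left (norm_sub_inner_smul_le he w) hcoef
      _ = 2 * (‖w‖ / ‖O‖) * (1 - ‖O‖ / ν) := by field_simp
  have hve : ‖v - e‖ ≤ (1 - ‖Vα‖) + q + (1 - ‖O‖ / ν) := by
    rw [← sub_add_sub_cancel v Vα e]
    exact (norm_add_le _ _).trans (by rw [hvV, norm_sub_rev]; linarith)
  have hD : ‖ν⁻¹ • (⟪w, v⟫ • v - ⟪w, e⟫ • e)‖
      ≤ 2 * (‖w‖ / ‖O‖) * ((1 - ‖Vα‖) + q + (1 - ‖O‖ / ν)) := by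
    calc ‖ν⁻¹ • (⟪w, v⟫ • v - ⟪w, e⟫ • e)‖ ≤ ‖O‖⁻¹ * (2 * ‖w‖ * ‖v - e‖) := by
          rw [norm_smul, Real.norm_of_nonneg (inv_nonneg.2 hν.le)]
          exact mul_le_mul (inv_anti₀ hm hOν) (norm_inner_smul_sub_inner_smul_le hv he w)
            (norm_nonneg _) (inv_nonneg.2 hm.le)
      _ ≤ ‖O‖⁻¹ * (2 * ‖w‖ * ((1 - ‖Vα‖) + q + (1 - ‖O‖ / ν))) := by gcongr
      _ = 2 * (‖w‖ / ‖O‖) * ((1 - ‖Vα‖) + q + (1 - ‖O‖ / ν)) := by ring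
  rw [hsplit]
  refine norm_add₄_le.trans ?_
  linarith

end InnerProductSpace

theorem zeta_norm_le_general
    (N : ℕ)
    (V : Fin N → EuclideanSpace ℝ (Fin 3)) (hV : ∀ i, ‖V i‖ = 1)
    (ω : Fin N → Fin N → ℝ) (hω : ∀ i j, ω i j = 0 ∨ ω i j = 1)
    (α : Fin N → ℝ) (hα : ∀ i, 0 ≤ α i) (hαsum : ∑ i, α i = 1)
    (w : Fin N → EuclideanSpace ℝ (Fin 3))
    (n : Fin N → ℝ) (hn : ∀ i, n i = ∑ j, ω i j)
    (O : Fin N → EuclideanSpace ℝ (Fin 3)) (hO : ∀ i, O i = ∑ j, ω i j • V j)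
    (D : Fin N → EuclideanSpace ℝ (Fin 3)) (hD : ∀ i, D i = O i + w i)
    (Vα : EuclideanSpace ℝ (Fin 3)) (hVα : Vα = ∑ i, α i • V i)
    (Q : Fin N → ℝ)
    (hQ : ∀ i, Q i = (1 / n i ^ 2) *
      ∑ j, ∑ j', |ω i j - n i * α j| * |ω i j' - n i * α j'| *
        InnerProductGeometry.angle (V j) (V j') ^ 2 / 2)
    (i : Fin N) (hO0 : O i ≠ 0) (hD0 : D i ≠ 0) (hVα0 : Vα ≠ 0) :
    ‖phi (D i) - (Vα + (n i)⁻¹ • w i - (⟪w i, Vα⟫ / (n i * ‖Vα‖ ^ 2)) • Vα)‖ ≤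
      2 * (1 - ‖Vα‖) * (‖w i‖ / ‖O i‖)
      + 2 * (‖w i‖ / ‖O i‖) ^ 2
      + (1 - ‖O i‖ / n i) * (1 + 4 * (‖w i‖ / ‖O i‖))
      + (1 + 2 * (‖w i‖ / ‖O i‖)) * Real.sqrt (Q i) := by
  have hω0 : ∀ j, 0 ≤ ω i j := fun j => by rcases hω i j with h | h <;> simp [h]
  have hOn : ‖O i‖ ≤ n i := by
    rw [hO i, hn i]; exact norm_sum_smul_le_sum_of_nonneg univ hV hω0
  have hVα1 : ‖Vα‖ ≤ 1 := by
    rw [hVα, ← hαsum]; exact norm_sum_smul_le_sum_of_nonneg univ hV hα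
  have hq : ‖(n i)⁻¹ • O i - Vα‖ ≤ √(Q i) := by
    rw [hO i, hVα, hQ i]
    exact norm_inv_smul_sum_sub_sum_le_sqrt hV (hn i).symm
      ((norm_pos_iff.2 hO0).trans_le hOn).ne' hαsum
  rw [hD i] at hD0 ⊢
  -- `phi` unfolds to `NormedSpace.normalize`.
  exact norm_normalize_add_sub_linearization_le hO0 hD0 hVα0 hOn hVα1 hq

/-- Proposition A.3: individual-level error bound for the reduced-order model. -/
theorem zeta_norm_le
    (N : ℕ) (hN : 0 < N)
    (V : Fin N → EuclideanSpace ℝ (Fin 3)) (hV : ∀ i, ‖V i‖ = 1)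
    (ω : Fin N → Fin N → ℝ) (hω : ∀ i j, ω i j = 0 ∨ ω i j = 1)
    (α : Fin N → ℝ) (hα : ∀ i, 0 ≤ α i) (hαsum : ∑ i, α i = 1)
    (w : Fin N → EuclideanSpace ℝ (Fin 3))
    (n : Fin N → ℝ) (hn : ∀ i, n i = ∑ j, ω i j)
    (O : Fin N → EuclideanSpace ℝ (Fin 3)) (hO : ∀ i, O i = ∑ j, ω i j • V j)
    (D : Fin N → EuclideanSpace ℝ (Fin 3)) (hD : ∀ i, D i = O i + w i)
    (Vα : EuclideanSpace ℝ (Fin 3)) (hVα : Vα = ∑ i, α i • V i)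
    (Q : Fin N → ℝ)
    (hQ : ∀ i, Q i = (1 / n i ^ 2) *
      ∑ j, ∑ j', |ω i j - n i * α j| * |ω i j' - n i * α j'| *
        InnerProductGeometry.angle (V j) (V j') ^ 2 / 2)
    (i : Fin N) (hn0 : 0 < n i) (hO0 : O i ≠ 0) (hD0 : D i ≠ 0) (hVα0 : Vα ≠ 0) :
    ‖phi (D i) - (Vα + (n i)⁻¹ • w i - (⟪w i, Vα⟫ / (n i * ‖Vα‖ ^ 2)) • Vα)‖ ≤
      2 * (1 - ‖Vα‖) * (‖w i‖ / ‖O i‖)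
      + 2 * (‖w i‖ / ‖O i‖) ^ 2
      + (1 - ‖O i‖ / n i) * (1 + 4 * (‖w i‖ / ‖O i‖))
      + (1 + 2 * (‖w i‖ / ‖O i‖)) * Real.sqrt (Q i) :=
  zeta_norm_le_general N V hV ω hω α hα hαsum w n hn O hO D hD Vα hVα Q hQ i hO0 hD0 hVα0
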